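/- arXiv:2501.00445 — 3 statements merged into one kernel-verified Lean document; each statement's English description precedes it below -/
import Mathlib

section
/- Let $a, b, c$ be positive real constants with $c > a$. Then for every $A > 0$, the double series $\sum_{m,k \geq 1} A^{m+k} \frac{m^{ak}}{m^{bm} k^{ck}}$ converges (is finite). -/
open Real

private lemma geo_bound (B δ : ℝ) (hB : 0 < B) (hδ : 0 < δ) (n : ℕ) (hn : 1 ≤ n)
    (h2B : 2 * B ≤ (n : ℝ) ^ δ) :
    B ^ ((n : ℕ) : ℝ) / ((n : ℕ) : ℝ) ^ (δ * ((n : ℕ) : ℝ)) ≤ (1/2 : ℝ) ^ n := by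
  have hn0 : (0:ℝ) < (n : ℝ) := by exact_mod_cast hn
  have hd : (0:ℝ) < (n : ℝ) ^ δ := rpow_pos_of_pos hn0 δ
  have e1 : B ^ ((n : ℕ) : ℝ) = B ^ n := rpow_natCast B n
  have e2 : ((n : ℕ) : ℝ) ^ (δ * ((n : ℕ) : ℝ)) = ((n : ℝ) ^ δ) ^ n := by
    rw [rpow_mul hn0.le, rpow_natCast]
  rw [e1, e2, ← div_pow]
  apply pow_le_pow_left₀ (by positivity)
  rw [div_le_div_iff₀ hd (by norm_num : (0:ℝ) < 2)] at *
  linarith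

private lemma sumaux (B δ : ℝ) (hB : 0 < B) (hδ : 0 < δ) :
    Summable (fun n : ℕ+ => B ^ ((n : ℕ) : ℝ) / ((n : ℕ) : ℝ) ^ (δ * ((n : ℕ) : ℝ))) := by
  set G : ℕ → ℝ := fun n => B ^ ((n : ℕ) : ℝ) / ((n : ℕ) : ℝ) ^ (δ * ((n : ℕ) : ℝ)) with hG
  have hGsum : Summable G := by
    obtain ⟨N, hN⟩ := exists_nat_gt ((2 * B) ^ (1 / δ))
    set M := max N 1 with hM
    rw [← summable_nat_add_iff M]
    have hbound : ∀ n : ℕ, G (n + M) ≤ (1/2 : ℝ) ^ n := by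
      intro n
      have hnM1 : 1 ≤ n + M := le_add_of_le_right (le_max_right N 1)
      have hge : ((2 * B) ^ (1 / δ) : ℝ) ≤ ((n + M : ℕ) : ℝ) := by
        have : (N : ℝ) ≤ ((n + M : ℕ) : ℝ) := by
          exact_mod_cast Nat.le_add_left N n |>.trans (Nat.add_le_add_left (le_max_left N 1) n)
        linarith
      have h2B : 2 * B ≤ ((n + M : ℕ) : ℝ) ^ δ := by
        have e : ((2 * B) ^ (1 / δ) : ℝ) ^ δ = 2 * B := by
          rw [← rpow_mul (by positivity), one_div, inv_mul_cancel₀ hδ.ne', rpow_one]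
        calc 2 * B = ((2 * B) ^ (1 / δ) : ℝ) ^ δ := e.symm
          _ ≤ ((n + M : ℕ) : ℝ) ^ δ := rpow_le_rpow (by positivity) hge hδ.le
      calc G (n + M) ≤ (1/2 : ℝ) ^ (n + M) := geo_bound B δ hB hδ _ hnM1 h2B
        _ ≤ (1/2 : ℝ) ^ n := pow_le_pow_of_le_one (by norm_num) (by norm_num) (by omega)
    apply Summable.of_nonneg_of_le (fun n => by positivity) hbound
    exact summable_geometric_of_lt_one (by norm_num) (by norm_num)
  exact hGsum.comp_injective (fun m n h => by exact_mod_cast PNat.coe_injective (by exact_mod_cast h))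

theorem stmt_1 (a b c : ℝ) (ha : 0 < a) (hb : 0 < b) (hc : 0 < c) (hca : a < c)
    (A : ℝ) (hA : 0 < A) :
    Summable (fun p : ℕ+ × ℕ+ =>
      A ^ (((p.1 : ℕ) : ℝ) + ((p.2 : ℕ) : ℝ)) *
        ((p.1 : ℕ) : ℝ) ^ (a * ((p.2 : ℕ) : ℝ)) /
        (((p.1 : ℕ) : ℝ) ^ (b * ((p.1 : ℕ) : ℝ)) *
          ((p.2 : ℕ) : ℝ) ^ (c * ((p.2 : ℕ) : ℝ)))) := by
  set C : ℝ := max 1 ((2 * a / b) ^ a) with hC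
  have hC1 : (1:ℝ) ≤ C := le_max_left _ _
  have hC0 : (0:ℝ) < C := lt_of_lt_of_le one_pos hC1
  set g1 : ℕ+ → ℝ := fun m => A ^ ((m:ℕ):ℝ) / ((m:ℕ):ℝ) ^ ((b/2) * ((m:ℕ):ℝ)) with hg1
  set h1 : ℕ+ → ℝ := fun k => A ^ ((k:ℕ):ℝ) / ((k:ℕ):ℝ) ^ (c * ((k:ℕ):ℝ)) with hh1
  set g2 : ℕ+ → ℝ := fun m => A ^ ((m:ℕ):ℝ) / ((m:ℕ):ℝ) ^ (b * ((m:ℕ):ℝ)) with hg2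
  set h2 : ℕ+ → ℝ := fun k => (A * C) ^ ((k:ℕ):ℝ) / ((k:ℕ):ℝ) ^ ((c - a) * ((k:ℕ):ℝ)) with hh2
  have sg1 : Summable g1 := sumaux A (b/2) hA (by positivity)
  have sh1 : Summable h1 := sumaux A c hA hc
  have sg2 : Summable g2 := sumaux A b hA hb
  have sh2 : Summable h2 := sumaux (A * C) (c - a) (by positivity) (by linarith)
  have nn : ∀ (f : ℕ+ → ℝ), (∀ n, 0 ≤ f n) → True := fun _ _ => trivial
  have hgnn : ∀ m : ℕ+, 0 ≤ g1 m := fun m => by positivity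
  have hh1nn : ∀ k : ℕ+, 0 ≤ h1 k := fun k => by positivity
  have hg2nn : ∀ m : ℕ+, 0 ≤ g2 m := fun m => by positivity
  have hh2nn : ∀ k : ℕ+, 0 ≤ h2 k := fun k => by positivity
  have sprod1 : Summable (fun p : ℕ+ × ℕ+ => g1 p.1 * h1 p.2) :=
    sg1.mul_of_nonneg sh1 hgnn hh1nn
  have sprod2 : Summable (fun p : ℕ+ × ℕ+ => g2 p.1 * h2 p.2) :=
    sg2.mul_of_nonneg sh2 hg2nn hh2nn
  apply Summable.of_nonneg_of_le (f := fun p : ℕ+ × ℕ+ => g1 p.1 * h1 p.2 + g2 p.1 * h2 p.2)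
  · intro p
    have hm : (0:ℝ) < ((p.1 : ℕ) : ℝ) := by exact_mod_cast p.1.pos
    have hk : (0:ℝ) < ((p.2 : ℕ) : ℝ) := by exact_mod_cast p.2.pos
    positivity
  · rintro ⟨m, k⟩
    simp only
    set x : ℝ := ((m:ℕ):ℝ) with hx
    set y : ℝ := ((k:ℕ):ℝ) with hy
    have hm1 : (1:ℝ) ≤ x := by rw [hx]; exact_mod_cast m.one_le
    have hk1 : (1:ℝ) ≤ y := by rw [hy]; exact_mod_cast k.one_le
    have hxg : g1 m = A ^ x / x ^ (b/2 * x) := rfl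
    have hxg2 : g2 m = A ^ x / x ^ (b * x) := rfl
    have hyh : h1 k = A ^ y / y ^ (c * y) := rfl
    have hyh2 : h2 k = (A * C) ^ y / y ^ ((c - a) * y) := rfl
    clear_value x y
    have hm0 : (0:ℝ) < x := lt_of_lt_of_le one_pos hm1
    have hk0 : (0:ℝ) < y := lt_of_lt_of_le one_pos hk1
    have hAsplit : A ^ (x + y) = A ^ x * A ^ y := rpow_add hA x y
    by_cases hcase : a * y ≤ b / 2 * x
    · -- bound by g1 * h1
      have key : x ^ (a * y) ≤ x ^ (b / 2 * x) := rpow_le_rpow_of_exponent_le hm1 hcase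
      have step : A ^ (x + y) * x ^ (a * y) / (x ^ (b * x) * y ^ (c * y)) ≤ g1 m * h1 k := by
        have heq : g1 m * h1 k = A ^ (x + y) * x ^ (b/2 * x) / (x ^ (b * x) * y ^ (c * y)) := by
          have hsplit : x ^ (b * x) = x ^ (b/2 * x) * x ^ (b/2 * x) := by
            rw [← rpow_add hm0]; congr 1; ring
          rw [hxg, hyh, hAsplit, hsplit]
          have h1' : x ^ (b/2 * x) ≠ 0 := by positivity
          have h2' : y ^ (c * y) ≠ 0 := by positivity
          field_simp
        rw [heq]
        gcongr
      calc A ^ (x + y) * x ^ (a * y) / (x ^ (b * x) * y ^ (c * y)) ≤ g1 m * h1 k := step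
        _ ≤ g1 m * h1 k + g2 m * h2 k := le_add_of_nonneg_right (by positivity)
    · -- bound by g2 * h2
      push_neg at hcase
      have hmle : x ≤ (2 * a / b) * y := by
        rw [div_mul_eq_mul_div, le_div_iff₀ hb]
        nlinarith
      have key : x ^ (a * y) ≤ C ^ y * y ^ (a * y) := by
        calc x ^ (a * y) ≤ ((2 * a / b) * y) ^ (a * y) :=
              rpow_le_rpow hm0.le hmle (by positivity)
          _ = (2 * a / b) ^ (a * y) * y ^ (a * y) := mul_rpow (by positivity) hk0.le
          _ ≤ C ^ y * y ^ (a * y) := by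
              have hCb : (2 * a / b) ^ (a * y) ≤ C ^ y := by
                calc (2 * a / b) ^ (a * y) = ((2 * a / b) ^ a) ^ y := by
                      rw [← rpow_mul (by positivity)]
                  _ ≤ C ^ y := rpow_le_rpow (by positivity) (le_max_right _ _) (by linarith)
              exact mul_le_mul_of_nonneg_right hCb (by positivity)
      have step : A ^ (x + y) * x ^ (a * y) / (x ^ (b * x) * y ^ (c * y)) ≤ g2 m * h2 k := by
        have heq : g2 m * h2 k =
            A ^ (x + y) * (C ^ y * y ^ (a * y)) / (x ^ (b * x) * y ^ (c * y)) := by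
          have hysplit : y ^ (c * y) = y ^ ((c - a) * y) * y ^ (a * y) := by
            rw [← rpow_add hk0]; congr 1; ring
          have hAC : (A * C) ^ y = A ^ y * C ^ y := mul_rpow hA.le hC0.le
          rw [hxg2, hyh2, hAsplit, hysplit, hAC]
          have h1' : x ^ (b * x) ≠ 0 := by positivity
          have h2' : y ^ ((c - a) * y) ≠ 0 := by positivity
          have h3' : y ^ (a * y) ≠ 0 := by positivity
          field_simp
        rw [heq]
        gcongr
      calc A ^ (x + y) * x ^ (a * y) / (x ^ (b * x) * y ^ (c * y)) ≤ g2 m * h2 k := step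
        _ ≤ g1 m * h1 k + g2 m * h2 k := le_add_of_nonneg_left (by positivity)
  · exact sprod1.add sprod2
end

section
/- Let $\alpha \in (0,1)$, $H \in (1/2,1)$ with $\alpha + H > 3/2$, and set $\zeta = 4 - 2H - 2\alpha < 1$. Then the double series $\sum_{m,k \geq 0} \frac{C^{m+k}}{\sqrt{m!}\, k!}\sqrt{\frac{[2(m+k)]!}{\Gamma((m+k)(2H+2\alpha-2)+1)}}$ converges for every constant $C > 0$. -/
/-!
With $n = m + k$ and $β = 2H + 2α - 2 = 2 - ζ ∈ (1, 2]$, the bound $\binom{n}{m} ≤ 2^n$ reduces the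
$(m, k)$ term to $|C|^n \sqrt{2^n (2n)! / (n!\,Γ(nβ + 1))}$. Comparing $(2n)!$ with
$⌊nβ⌋! ≤ Γ(nβ + 1)$ and using $n! ≥ (n + 1)^n e^{-(n+1)}$ bounds this by $\sqrt{2e}\,x_n^n$ where
$x_n = |C| \sqrt{8e\,(2n + 2)^{1 - β}}$ decreases to $0$ because $β > 1$. Finally
$x_{m+k}^{m+k} ≤ x_m^m x_k^k$, and $\sum x_m^m$ converges by the root test.
-/

open Real Filter Topology Nat

lemma summable_pow_self_of_tendsto_zero {x : ℕ → ℝ} (hx : Tendsto x atTop (𝓝 0)) :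
    Summable fun n => x n ^ n := by
  refine summable_geometric_two.of_norm_bounded_eventually_nat ?_
  filter_upwards [(tendsto_zero_iff_norm_tendsto_zero.mp hx).eventually_le_const
    (by norm_num : (0 : ℝ) < 1 / 2)] with n hn
  rw [norm_pow]
  exact pow_le_pow_left₀ (norm_nonneg _) hn n

lemma Antitone.summable_pow_self_add {x : ℕ → ℝ} (hanti : Antitone x)
    (hx : Tendsto x atTop (𝓝 0)) :
    Summable fun p : ℕ × ℕ => x (p.1 + p.2) ^ (p.1 + p.2) := by
  have h0 (n : ℕ) : 0 ≤ x n := hanti.le_of_tendsto hx n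
  have hs := summable_pow_self_of_tendsto_zero hx
  refine .of_nonneg_of_le (fun p => pow_nonneg (h0 _) _) (fun ⟨m, k⟩ => ?_)
    (hs.mul_of_nonneg hs (fun n => pow_nonneg (h0 n) n) (fun n => pow_nonneg (h0 n) n))
  rw [pow_add]
  exact mul_le_mul (pow_le_pow_left₀ (h0 _) (hanti (m.le_add_right k)) m)
    (pow_le_pow_left₀ (h0 _) (hanti (k.le_add_left m)) k) (pow_nonneg (h0 _) _)
    (pow_nonneg (h0 _) _)

lemma Nat.factorial_le_factorial_mul_pow_sub {n m : ℕ} (h : n ≤ m) :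
    m ! ≤ n ! * m ^ (m - n) := by
  rw [← Nat.factorial_mul_descFactorial (Nat.sub_le m n), Nat.sub_sub_self h]
  exact Nat.mul_le_mul_left _ (Nat.descFactorial_le_pow _ _)

lemma Nat.factorial_add_le_two_pow_mul (m k : ℕ) : (m + k)! ≤ 2 ^ (m + k) * (m ! * k !) := by
  rw [← Nat.add_choose_mul_factorial_mul_factorial, mul_assoc]
  exact Nat.mul_le_mul_right _ (Nat.choose_le_two_pow _ _)

lemma Real.sqrt_pow {x : ℝ} (hx : 0 ≤ x) (n : ℕ) : √(x ^ n) = √x ^ n :=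
  (sqrt_eq_iff_eq_sq (by positivity) (by positivity)).mpr <| by
    rw [← pow_mul, mul_comm, pow_mul, sq_sqrt hx]

lemma Real.factorial_floor_le_Gamma_add_one {x : ℝ} (hx : 1 ≤ x) :
    (⌊x⌋₊ ! : ℝ) ≤ Gamma (x + 1) := by
  have h1 : 1 ≤ ⌊x⌋₊ := Nat.le_floor (by simpa using hx)
  rw [← Gamma_nat_eq_factorial]
  refine Gamma_strictMonoOn_Ici.monotoneOn ?_ ?_
    (by linarith [Nat.floor_le (by linarith : 0 ≤ x)])
  · simp only [Set.mem_Ici]; exact_mod_cast Nat.succ_le_succ h1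
  · simp only [Set.mem_Ici]; linarith

lemma factorial_two_mul_le_Gamma_mul {β : ℝ} (hβ₁ : 1 ≤ β) (hβ₂ : β ≤ 2) (n : ℕ) :
    ((2 * n)! : ℝ) ≤ Gamma (n * β + 1) * (2 * n + 2) ^ (n + 1) * ((2 * n + 2) ^ (1 - β)) ^ n := by
  rcases n.eq_zero_or_pos with rfl | hn
  · norm_num
  have hn' : (1 : ℝ) ≤ n := by exact_mod_cast hn
  -- `N! ≤ Γ(nβ + 1)`, and the remaining `2n - N` factors of `(2n)!` number at most `n(2 - β) + 1`.
  set N := ⌊(n : ℝ) * β⌋₊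
  have hN : N ≤ 2 * n := Nat.floor_le_of_le (by push_cast; nlinarith)
  have hgap : ((2 * n - N : ℕ) : ℝ) ≤ n * (2 - β) + 1 := by
    rw [Nat.cast_sub hN]; push_cast; linarith [Nat.lt_floor_add_one ((n : ℝ) * β)]
  calc ((2 * n)! : ℝ) ≤ N ! * ((2 * n : ℕ) : ℝ) ^ (2 * n - N) := by
        exact_mod_cast Nat.factorial_le_factorial_mul_pow_sub hN
    _ ≤ Gamma (n * β + 1) * (2 * n + 2) ^ ((2 * n - N : ℕ) : ℝ) := by
        rw [rpow_natCast]
        gcongr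
        · exact factorial_floor_le_Gamma_add_one (by nlinarith)
        · push_cast; linarith
    _ ≤ Gamma (n * β + 1) * (2 * n + 2) ^ (n * (2 - β) + 1) := by
        gcongr
        · linarith
    _ = Gamma (n * β + 1) * (2 * n + 2) ^ (n + 1) * ((2 * n + 2) ^ (1 - β)) ^ n := by
        rw [show (n : ℝ) * (2 - β) + 1 = ((n + 1 : ℕ) : ℝ) + (1 - β) * n by push_cast; ring,
          rpow_add (by positivity), rpow_natCast, rpow_mul_natCast (by positivity)]
        ring

lemma two_pow_mul_factorial_two_mul_div_le {β : ℝ} (hβ₁ : 1 ≤ β) (hβ₂ : β ≤ 2) (n : ℕ) :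
    2 ^ n * (2 * n)! / (n ! * Gamma (n * β + 1)) ≤
      2 * exp 1 * (8 * exp 1 * (2 * n + 2) ^ (1 - β)) ^ n := by
  have hΓ : 0 < Gamma (n * β + 1) := Gamma_pos_of_pos (by positivity)
  have hpow : ((n : ℝ) + 1) ^ n ≤ exp 1 ^ (n + 1) * n ! := by
    have := pow_div_factorial_le_exp (x := (n : ℝ) + 1) (by positivity) n
    rw [div_le_iff₀ (by positivity)] at this
    simpa using this
  have hlin : (n : ℝ) + 1 ≤ 2 ^ n := by exact_mod_cast Nat.lt_two_pow_self
  have key : (2 : ℝ) ^ n * (2 * n + 2) ^ (n + 1) ≤ 2 * exp 1 * (8 * exp 1) ^ n * n ! :=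
    calc (2 : ℝ) ^ n * (2 * n + 2) ^ (n + 1) = 2 * 4 ^ n * (((n : ℝ) + 1) * (n + 1) ^ n) := by
          rw [show (2 * n + 2 : ℝ) = 2 * (n + 1) by ring, mul_pow, pow_succ,
            show (4 : ℝ) = 2 * 2 by norm_num, mul_pow]
          ring
      _ ≤ 2 * 4 ^ n * (2 ^ n * (exp 1 ^ (n + 1) * n !)) := by gcongr
      _ = 2 * exp 1 * (8 * exp 1) ^ n * n ! := by
          rw [show (8 : ℝ) = 4 * 2 by norm_num, mul_pow, mul_pow]
          ring
  rw [div_le_iff₀ (by positivity)]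
  calc 2 ^ n * ((2 * n)! : ℝ)
      ≤ 2 ^ n * (Gamma (n * β + 1) * (2 * n + 2) ^ (n + 1) * ((2 * n + 2) ^ (1 - β)) ^ n) := by
        gcongr; exact factorial_two_mul_le_Gamma_mul hβ₁ hβ₂ n
    _ = (2 ^ n * (2 * n + 2) ^ (n + 1)) *
          (Gamma (n * β + 1) * ((2 * n + 2) ^ (1 - β)) ^ n) := by
        ring
    _ ≤ (2 * exp 1 * (8 * exp 1) ^ n * n !) *
          (Gamma (n * β + 1) * ((2 * n + 2) ^ (1 - β)) ^ n) := by
        gcongr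
    _ = 2 * exp 1 * (8 * exp 1 * (2 * n + 2) ^ (1 - β)) ^ n * (n ! * Gamma (n * β + 1)) := by
        ring

lemma norm_term_le {β : ℝ} (hβ₁ : 1 ≤ β) (hβ₂ : β ≤ 2) (C : ℝ) (m k : ℕ) :
    ‖C ^ (m + k) / (√(m ! : ℝ) * (k ! : ℝ)) *
        √(((2 * (m + k))! : ℝ) / Gamma (((m + k : ℕ) : ℝ) * β + 1))‖ ≤
      √(2 * exp 1) * (|C| * √(8 * exp 1 * (2 * ((m + k : ℕ) : ℝ) + 2) ^ (1 - β))) ^ (m + k) := by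
  set n := m + k
  have hden : √((n ! : ℝ) / 2 ^ n) ≤ √(m ! : ℝ) * k ! :=
    calc √((n ! : ℝ) / 2 ^ n) ≤ √((m ! : ℝ) * k !) := by
          gcongr
          rw [div_le_iff₀ (by positivity), mul_comm]
          exact_mod_cast Nat.factorial_add_le_two_pow_mul m k
      _ = √(m ! : ℝ) * √(k ! : ℝ) := sqrt_mul (by positivity) _
      _ ≤ √(m ! : ℝ) * k ! := by
          gcongr
          exact sqrt_le_self_iff.mpr (Or.inr (Nat.one_le_cast.mpr k.factorial_pos))
  calc _ = |C| ^ n * √(((2 * n)! : ℝ) / Gamma (n * β + 1)) / (√(m ! : ℝ) * k !) := by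
        rw [Real.norm_eq_abs, abs_mul, abs_div, abs_pow, abs_of_nonneg (sqrt_nonneg _),
          abs_of_nonneg (by positivity : (0 : ℝ) ≤ √(m ! : ℝ) * k !)]
        ring
    _ ≤ |C| ^ n * √(((2 * n)! : ℝ) / Gamma (n * β + 1)) / √((n ! : ℝ) / 2 ^ n) := by
        gcongr
    _ = |C| ^ n * √(2 ^ n * (2 * n)! / (n ! * Gamma (n * β + 1))) := by
        rw [mul_div_assoc, ← sqrt_div' _ (by positivity)]
        congr 2
        field_simp
    _ ≤ |C| ^ n * √(2 * exp 1 * (8 * exp 1 * (2 * n + 2) ^ (1 - β)) ^ n) := by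
        gcongr; exact two_pow_mul_factorial_two_mul_div_le hβ₁ hβ₂ n
    _ = √(2 * exp 1) * (|C| * √(8 * exp 1 * (2 * n + 2) ^ (1 - β))) ^ n := by
        rw [sqrt_mul (by positivity), sqrt_pow (by positivity), mul_pow]
        ring

theorem stmt_15_general (α H : ℝ) (hα : α ∈ Set.Ioo (0 : ℝ) 1) (hH : H ∈ Set.Ioo (1 / 2 : ℝ) 1)
    (h : 3 / 2 < α + H) (C : ℝ) :
    Summable (fun p : ℕ × ℕ =>
      C ^ (p.1 + p.2) /
          (Real.sqrt (Nat.factorial p.1 : ℝ) * (Nat.factorial p.2 : ℝ)) *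
        Real.sqrt ((Nat.factorial (2 * (p.1 + p.2)) : ℝ) /
          Real.Gamma (((p.1 + p.2 : ℕ) : ℝ) * (2 * H + 2 * α - 2) + 1))) := by
  set β := 2 * H + 2 * α - 2
  have hβ₁ : 1 < β := by linarith
  have hβ₂ : β ≤ 2 := by linarith [hα.2, hH.2]
  set x : ℕ → ℝ := fun n => |C| * √(8 * exp 1 * (2 * (n : ℝ) + 2) ^ (1 - β))
  have hanti : Antitone x := fun a b hab => by
    dsimp only [x]
    gcongr |C| * √(8 * exp 1 * ?_)
    exact rpow_le_rpow_of_nonpos (by positivity) (by gcongr) (by linarith)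
  have hlim : Tendsto x atTop (𝓝 0) := by
    have hbase : Tendsto (fun n : ℕ => 2 * (n : ℝ) + 2) atTop atTop :=
      tendsto_atTop_add_const_right _ _ (tendsto_natCast_atTop_atTop.const_mul_atTop two_pos)
    have hdecay := (tendsto_rpow_neg_atTop (by linarith : 0 < β - 1)).comp hbase
    rw [neg_sub] at hdecay
    simpa using ((hdecay.const_mul (8 * exp 1)).sqrt).const_mul |C|
  exact ((hanti.summable_pow_self_add hlim).mul_left (√(2 * exp 1))).of_norm_bounded
    fun p => norm_term_le hβ₁.le hβ₂ C p.1 p.2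

theorem stmt_15 (α H : ℝ) (hα : α ∈ Set.Ioo (0 : ℝ) 1) (hH : H ∈ Set.Ioo (1 / 2 : ℝ) 1)
    (h : 3 / 2 < α + H) (C : ℝ) (hC : 0 < C) :
    Summable (fun p : ℕ × ℕ =>
      C ^ (p.1 + p.2) /
          (Real.sqrt (Nat.factorial p.1 : ℝ) * (Nat.factorial p.2 : ℝ)) *
        Real.sqrt ((Nat.factorial (2 * (p.1 + p.2)) : ℝ) /
          Real.Gamma (((p.1 + p.2 : ℕ) : ℝ) * (2 * H + 2 * α - 2) + 1))) :=
  stmt_15_general α H hα hH h C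
end

section
/- Let $\alpha \in (0,1)$ and let $\tau$ be a renewal process on $\mathbb{N}$ with $\tau_0 = 0$ such that for some constant $A > 0$ and some $\alpha' \in (0,\alpha)$, $\mathbb{P}(n \in \tau) \leq A n^{\alpha'-1}$ for all $n \geq 1$ (after scaling). Then for $h_N = \hat{h} N^{-\alpha'}$ with $\hat h > 0$, $\sup_N \mathbb{E}\big[\exp\big(h_N \sum_{n=1}^N \mathbf{1}_{\{n\in\tau\}}\big)\big] < \infty$. -/
/-!
Writing `exp (h ∑ 1_{n ∈ τ}) = ∏ (1 + (e^h - 1) 1_{n ∈ τ})` and expanding, the exponential moment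
is `∑_{I ⊆ [1, N]} (e^h - 1)^{|I|} P(I ⊆ τ)`. By the renewal property `P(I ⊆ τ)` is at most
`∏ A g_i^{α' - 1}` over the gaps `g` of `I`, which form a composition of a number `≤ N` into
`k = |I|` positive parts. At least half of these parts are `≤ 2N/(k+1)`, and
`∑_{g ≤ M} g^{α'-1} ≤ M^{α'}/α'`, so with `e^h - 1 ≤ ĥ e^ĥ N^{-α'}` the `k`-th term is at most
`(C (2/(k+1))^{α'/2})^k` for a constant `C` independent of `N`; this is summable in `k`.
-/

open MeasureTheory Finset Filter Topology

lemma Real.exp_sub_one_le_mul_exp (x : ℝ) : exp x - 1 ≤ x * exp x := by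
  have := mul_le_mul_of_nonneg_left (add_one_le_exp (-x)) (exp_pos x).le
  rw [← exp_add, add_neg_cancel, exp_zero] at this
  linarith

lemma Real.mul_rpow_sub_one_le_rpow_sub_rpow {p x : ℝ} (hp0 : 0 ≤ p) (hp1 : p ≤ 1) (hx : 1 ≤ x) :
    p * x ^ (p - 1) ≤ x ^ p - (x - 1) ^ p := by
  have hx0 : 0 < x := by linarith
  have hbernoulli :=
    rpow_one_add_le_one_add_mul_self (neg_le_neg (inv_le_one_of_one_le₀ hx)) hp0 hp1
  have hfactor : (x - 1) ^ p = x ^ p * (1 + -x⁻¹) ^ p := by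
    rw [← mul_rpow hx0.le (by linarith [inv_le_one_of_one_le₀ hx])]
    congr 1
    field_simp
    ring
  rw [hfactor, rpow_sub_one hx0.ne', div_eq_mul_inv]
  linarith [mul_le_mul_of_nonneg_left hbernoulli (rpow_pos_of_pos hx0 p).le]

lemma sum_Icc_rpow_sub_one_le {p : ℝ} (hp0 : 0 < p) (hp1 : p ≤ 1) (M : ℕ) :
    ∑ g ∈ Icc 1 M, (g : ℝ) ^ (p - 1) ≤ (M : ℝ) ^ p / p := by
  rw [le_div_iff₀ hp0, sum_mul]
  induction M with
  | zero => simp [Real.zero_rpow hp0.ne']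
  | succ M ih =>
    have := Real.mul_rpow_sub_one_le_rpow_sub_rpow hp0.le hp1 (x := M + 1) (by simp)
    rw [sum_Icc_succ_top (by omega)]
    push_cast
    simp only [add_sub_cancel_right] at this
    linarith

def gaps {k : ℕ} (n : Fin k → ℕ) (i : Fin k) : ℕ :=
  n i - (if (i : ℕ) = 0 then 0 else n ⟨(i : ℕ) - 1, lt_of_le_of_lt (Nat.sub_le _ _) i.isLt⟩)

section Gaps

variable {k : ℕ} {n : Fin k → ℕ}

lemma gaps_pos (hn : StrictMono n) (hpos : ∀ i, 0 < n i) (i : Fin k) : 0 < gaps n i := by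
  unfold gaps
  split_ifs with hi
  · simpa using hpos i
  · have : n ⟨(i : ℕ) - 1, by omega⟩ < n i := hn (Fin.lt_def.mpr (by simp; omega))
    omega

lemma sum_Iic_gaps (hn : Monotone n) (i : Fin k) : ∑ j ∈ Iic i, gaps n j = n i := by
  obtain ⟨m, hm⟩ := i
  induction m with
  | zero =>
    have : Iic (⟨0, hm⟩ : Fin k) = {⟨0, hm⟩} := by
      ext j; simp [Fin.le_def, Fin.ext_iff]
    simp [this, gaps]
  | succ m ih =>
    have hIic : Iic (⟨m + 1, hm⟩ : Fin k) = insert ⟨m + 1, hm⟩ (Iic ⟨m, by omega⟩) := by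
      ext j; simp only [mem_Iic, mem_insert, Fin.le_def, Fin.ext_iff]; omega
    have hle : n ⟨m, by omega⟩ ≤ n ⟨m + 1, hm⟩ := hn (Fin.le_def.mpr (by simp))
    rw [hIic, sum_insert (by simp [Fin.le_def]), ih (by omega)]
    simp only [gaps, Nat.add_one_ne_zero, if_false, Nat.add_sub_cancel]
    omega

lemma sum_gaps_le {N : ℕ} (hn : Monotone n) (hN : ∀ i, n i ≤ N) : ∑ i, gaps n i ≤ N := by
  cases k with
  | zero => simp
  | succ k => rw [← Iic_top, sum_Iic_gaps hn]; exact hN _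

lemma gaps_inj_of_monotone {n' : Fin k → ℕ} (hn : Monotone n) (hn' : Monotone n')
    (h : gaps n = gaps n') : n = n' := by
  ext i
  rw [← sum_Iic_gaps hn, ← sum_Iic_gaps hn', h]

end Gaps

def boundedCompositions (k N : ℕ) : Finset (Fin k → ℕ) :=
  {g ∈ Fintype.piFinset fun _ => Icc 1 N | ∑ i, g i ≤ N}

lemma le_two_mul_card_filter_le_div {k N : ℕ} {g : Fin k → ℕ} (hg : ∑ i, g i ≤ N) :
    k ≤ 2 * #{i | g i ≤ 2 * N / (k + 1)} := by
  set t := 2 * N / (k + 1)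
  have hlarge : #{i | ¬ g i ≤ t} * (t + 1) ≤ N :=
    calc #{i | ¬ g i ≤ t} * (t + 1) = ∑ _i ∈ {i | ¬ g i ≤ t}, (t + 1) := by simp
      _ ≤ ∑ i ∈ {i | ¬ g i ≤ t}, g i := sum_le_sum fun i hi => by simp at hi; omega
      _ ≤ N := (sum_le_sum_of_subset (subset_univ _)).trans hg
  have ht : 2 * N < (k + 1) * (t + 1) := Nat.lt_mul_div_succ _ k.succ_pos
  have hcard := card_filter_add_card_filter_not (s := univ) fun i => g i ≤ t
  rw [card_univ, Fintype.card_fin] at hcard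
  have : 2 * #{i | ¬ g i ≤ t} < k + 1 :=
    Nat.lt_of_mul_lt_mul_right (a := t + 1) (by nlinarith)
  omega

lemma sum_piFinset_ite_prod {ι : Type*} [Fintype ι] [DecidableEq ι] (f : ℕ → ℝ) (J : Finset ι)
    (s s' : Finset ℕ) :
    ∑ g ∈ Fintype.piFinset (fun i => if i ∈ J then s else s'), ∏ i, f (g i) =
      (∑ m ∈ s, f m) ^ #J * (∑ m ∈ s', f m) ^ (Fintype.card ι - #J) := by
  rw [← prod_univ_sum, ← card_compl]
  simp only [apply_ite (fun t => ∑ m ∈ t, f m)]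
  rw [prod_ite, prod_const, prod_const, filter_mem_eq_inter, univ_inter]
  congr 2
  exact congrArg card (by ext; simp)

theorem sum_boundedCompositions_prod_le {f : ℕ → ℝ} (hf : ∀ n, 0 ≤ f n) {k N : ℕ} {b ρ : ℝ}
    (hρ0 : 0 ≤ ρ) (hρ1 : ρ ≤ 1) (hsmall : ∑ m ∈ Icc 1 (2 * N / (k + 1)), f m ≤ b * ρ ^ 2)
    (hall : ∑ m ∈ Icc 1 N, f m ≤ b) :
    ∑ g ∈ boundedCompositions k N, ∏ i, f (g i) ≤ (2 * b * ρ) ^ k := by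
  classical
  set t := 2 * N / (k + 1)
  have hS : ∀ M, 0 ≤ ∑ m ∈ Icc 1 M, f m := fun M => sum_nonneg fun m _ => hf m
  have hb : 0 ≤ b := (hS N).trans hall
  let small : (Fin k → ℕ) → Finset (Fin k) := fun g => {i | g i ≤ t}
  let large : Finset (Finset (Fin k)) := {J | k ≤ 2 * #J}
  let box : Finset (Fin k) → Finset (Fin k → ℕ) :=
    fun J => Fintype.piFinset fun i => if i ∈ J then Icc 1 t else Icc 1 N
  have hmaps : ∀ g ∈ boundedCompositions k N, small g ∈ large := fun g hg => by
    simpa [large] using le_two_mul_card_filter_le_div (mem_filter.mp hg).2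
  have hfiber : ∀ J, {g ∈ boundedCompositions k N | small g = J} ⊆ box J := by
    rintro J g hg
    simp only [boundedCompositions, mem_filter, Fintype.mem_piFinset] at hg
    obtain ⟨⟨hgN, -⟩, rfl⟩ := hg
    simp only [box, Fintype.mem_piFinset]
    intro i
    split_ifs with hi
    · simp only [small, mem_filter, mem_univ, true_and] at hi
      exact mem_Icc.mpr ⟨(mem_Icc.mp (hgN i)).1, hi⟩
    · exact hgN i
  have hbox : ∀ J ∈ large, ∑ g ∈ box J, ∏ i, f (g i) ≤ b ^ k * ρ ^ k := by
    intro J hJ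
    have hJk : #J ≤ k := by simpa using card_le_univ J
    rw [sum_piFinset_ite_prod, Fintype.card_fin]
    calc (∑ m ∈ Icc 1 t, f m) ^ #J * (∑ m ∈ Icc 1 N, f m) ^ (k - #J)
        ≤ (b * ρ ^ 2) ^ #J * b ^ (k - #J) :=
          mul_le_mul (pow_le_pow_left₀ (hS _) hsmall _) (pow_le_pow_left₀ (hS _) hall _)
            (pow_nonneg (hS _) _) (by positivity)
      _ = b ^ k * ρ ^ (2 * #J) := by
        rw [mul_pow, ← pow_mul, mul_comm 2, mul_right_comm, ← pow_add, Nat.add_sub_cancel' hJk]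
      _ ≤ b ^ k * ρ ^ k :=
        mul_le_mul_of_nonneg_left (pow_le_pow_of_le_one hρ0 hρ1 (mem_filter.mp hJ).2)
          (by positivity)
  have hcard : (#large : ℝ) ≤ 2 ^ k := by
    exact_mod_cast (card_filter_le _ _).trans (by simp)
  calc ∑ g ∈ boundedCompositions k N, ∏ i, f (g i)
      = ∑ J ∈ large, ∑ g ∈ boundedCompositions k N with small g = J, ∏ i, f (g i) :=
        (sum_fiberwise_of_maps_to hmaps _).symm
    _ ≤ ∑ J ∈ large, ∑ g ∈ box J, ∏ i, f (g i) :=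
        sum_le_sum fun J _ => sum_le_sum_of_subset_of_nonneg (hfiber J)
          fun g _ _ => prod_nonneg fun i _ => hf _
    _ ≤ ∑ _J ∈ large, b ^ k * ρ ^ k := sum_le_sum hbox
    _ ≤ 2 ^ k * (b ^ k * ρ ^ k) := by
        rw [sum_const, nsmul_eq_mul]
        exact mul_le_mul_of_nonneg_right hcard (by positivity)
    _ = (2 * b * ρ) ^ k := by ring

lemma exp_mul_sum_indicator_eq {Ω : Type*} {T : Ω → Set ℕ} (h : ℝ) (s : Finset ℕ) (x : Ω) :
    Real.exp (h * ∑ n ∈ s, (T x).indicator (fun _ => (1 : ℝ)) n) =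
      ∑ I ∈ s.powerset, (Real.exp h - 1) ^ #I * {x | ↑I ⊆ T x}.indicator 1 x := by
  classical
  have hfactor : ∀ n, Real.exp (h * (T x).indicator (fun _ => (1 : ℝ)) n) =
      (Real.exp h - 1) * (T x).indicator 1 n + 1 := by
    intro n
    by_cases hn : n ∈ T x <;> simp [hn]
  rw [mul_sum, Real.exp_sum, prod_congr rfl fun n _ => hfactor n, prod_add]
  refine sum_congr rfl fun I _ => ?_
  rw [prod_const_one, mul_one, prod_mul_distrib, prod_const]
  congr 1
  by_cases hI : ↑I ⊆ T x
  · rw [Set.indicator_of_mem (show x ∈ {x | ↑I ⊆ T x} from hI)]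
    exact prod_eq_one fun n hn => Set.indicator_of_mem (hI hn) _
  · rw [Set.indicator_of_notMem (show x ∉ {x | ↑I ⊆ T x} from hI)]
    obtain ⟨n, hnI, hnT⟩ := Set.not_subset.mp hI
    exact prod_eq_zero hnI (Set.indicator_of_notMem hnT _)

lemma summable_pow_self_of_tendsto_zero_s19 {r : ℕ → ℝ} (hr0 : ∀ k, 0 ≤ r k)
    (hr : Tendsto r atTop (𝓝 0)) : Summable fun k => r k ^ k := by
  refine summable_geometric_two.of_norm_bounded_eventually_nat ?_
  filter_upwards [hr.eventually (ge_mem_nhds (by norm_num : (0 : ℝ) < 1 / 2))] with k hk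
  rw [Real.norm_of_nonneg (pow_nonneg (hr0 k) k)]
  exact pow_le_pow_left₀ (hr0 k) hk k

section Renewal

variable {Ω : Type*} [MeasurableSpace Ω] {μ : Measure Ω} {T : Ω → Set ℕ}

def HasRenewalProperty (μ : Measure Ω) (T : Ω → Set ℕ) : Prop :=
  ∀ (k : ℕ) (n : Fin k → ℕ), StrictMono n → (∀ i, 0 < n i) →
    μ {x | ∀ i, n i ∈ T x} = ∏ i, μ {x | gaps n i ∈ T x}

lemma measurableSet_coe_subset (hmeas : ∀ n, MeasurableSet {x | n ∈ T x}) (I : Finset ℕ) :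
    MeasurableSet {x | ↑I ⊆ T x} := by
  simp only [Set.subset_def, Finset.mem_coe, Set.ofPred_forall]
  exact Finset.measurableSet_biInter I fun n _ => hmeas n

theorem integral_exp_mul_sum_indicator [IsFiniteMeasure μ]
    (hmeas : ∀ n, MeasurableSet {x | n ∈ T x}) (h : ℝ) (s : Finset ℕ) :
    ∫ x, Real.exp (h * ∑ n ∈ s, (T x).indicator (fun _ => (1 : ℝ)) n) ∂μ =
      ∑ I ∈ s.powerset, (Real.exp h - 1) ^ #I * μ.real {x | ↑I ⊆ T x} := by
  simp_rw [exp_mul_sum_indicator_eq]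
  rw [integral_finsetSum _ fun I _ =>
    ((integrable_indicator_iff (measurableSet_coe_subset hmeas I)).mpr
      (integrableOn_const (measure_ne_top μ _))).const_mul _]
  refine sum_congr rfl fun I _ => ?_
  rw [integral_const_mul, integral_indicator_one (measurableSet_coe_subset hmeas I)]

lemma measureReal_subset_le_prod_gaps {f : ℕ → ℝ} (hrenew : HasRenewalProperty μ T)
    (hf : ∀ n, 0 ≤ f n) (hbound : ∀ n, 1 ≤ n → μ {x | n ∈ T x} ≤ ENNReal.ofReal (f n))
    {k : ℕ} {I : Finset ℕ} (hI : #I = k) (hpos : ∀ m ∈ I, 0 < m) :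
    μ.real {x | ↑I ⊆ T x} ≤ ∏ i, f (gaps (I.orderEmbOfFin hI) i) := by
  have hmono := (I.orderEmbOfFin hI).strictMono
  have hnpos : ∀ i, 0 < I.orderEmbOfFin hI i := fun i => hpos _ (orderEmbOfFin_mem I hI i)
  have hset : {x | ↑I ⊆ T x} = {x | ∀ i, I.orderEmbOfFin hI i ∈ T x} := by
    ext x
    rw [Set.mem_ofPred_eq, Set.mem_ofPred_eq, ← Set.range_subset_iff, range_orderEmbOfFin]
  rw [measureReal_def, hset, hrenew k _ hmono hnpos]
  refine ENNReal.toReal_le_of_le_ofReal (prod_nonneg fun i _ => hf _) ?_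
  rw [ENNReal.ofReal_prod_of_nonneg fun i _ => hf _]
  exact prod_le_prod' fun i _ => hbound _ (gaps_pos hmono hnpos i)

theorem sum_powersetCard_measureReal_le {f : ℕ → ℝ} (hrenew : HasRenewalProperty μ T)
    (hf : ∀ n, 0 ≤ f n) (hbound : ∀ n, 1 ≤ n → μ {x | n ∈ T x} ≤ ENNReal.ofReal (f n))
    (k N : ℕ) :
    ∑ I ∈ powersetCard k (Icc 1 N), μ.real {x | ↑I ⊆ T x} ≤
      ∑ g ∈ boundedCompositions k N, ∏ i, f (g i) := by
  classical
  let e : Finset ℕ → Fin k → ℕ := fun I => if hI : #I = k then gaps (I.orderEmbOfFin hI) else 0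
  have he : ∀ I (hI : #I = k), e I = gaps (I.orderEmbOfFin hI) := fun I hI => dif_pos hI
  have hinj : Set.InjOn e (powersetCard k (Icc 1 N)) := by
    intro I hI I' hI' hII'
    obtain ⟨-, hcard⟩ := mem_powersetCard.mp hI
    obtain ⟨-, hcard'⟩ := mem_powersetCard.mp hI'
    rw [he I hcard, he I' hcard'] at hII'
    have := gaps_inj_of_monotone (I.orderEmbOfFin hcard).monotone
      (I'.orderEmbOfFin hcard').monotone hII'
    rw [← coe_inj, ← range_orderEmbOfFin I hcard, ← range_orderEmbOfFin I' hcard']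
    exact congrArg Set.range this
  have hmaps : ∀ I ∈ powersetCard k (Icc 1 N), e I ∈ boundedCompositions k N := by
    intro I hI
    obtain ⟨hsub, hcard⟩ := mem_powersetCard.mp hI
    have hmem : ∀ i, I.orderEmbOfFin hcard i ∈ Icc 1 N :=
      fun i => hsub (orderEmbOfFin_mem I hcard i)
    have hpos := gaps_pos (I.orderEmbOfFin hcard).strictMono fun i => (mem_Icc.mp (hmem i)).1
    have hsum := sum_gaps_le (I.orderEmbOfFin hcard).monotone fun i => (mem_Icc.mp (hmem i)).2
    simp only [boundedCompositions, mem_filter, Fintype.mem_piFinset, he I hcard]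
    exact ⟨fun i => mem_Icc.mpr ⟨hpos i, (single_le_sum (by simp) (mem_univ i)).trans hsum⟩,
      hsum⟩
  calc ∑ I ∈ powersetCard k (Icc 1 N), μ.real {x | ↑I ⊆ T x}
      ≤ ∑ I ∈ powersetCard k (Icc 1 N), ∏ i, f (e I i) := by
        refine sum_le_sum fun I hI => ?_
        obtain ⟨hsub, hcard⟩ := mem_powersetCard.mp hI
        rw [he I hcard]
        exact measureReal_subset_le_prod_gaps hrenew hf hbound hcard
          fun m hm => (mem_Icc.mp (hsub hm)).1
    _ = ∑ g ∈ (powersetCard k (Icc 1 N)).image e, ∏ i, f (g i) :=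
        (sum_image (f := fun g => ∏ i, f (g i)) hinj).symm
    _ ≤ ∑ g ∈ boundedCompositions k N, ∏ i, f (g i) :=
        sum_le_sum_of_subset_of_nonneg (image_subset_iff.mpr hmaps)
          fun g _ _ => prod_nonneg fun i _ => hf _

theorem sum_powersetCard_exp_sub_one_pow_mul_le [IsProbabilityMeasure μ]
    (hrenew : HasRenewalProperty μ T) {A p hhat : ℝ} (hA : 0 ≤ A) (hp0 : 0 < p) (hp1 : p ≤ 1)
    (hhat0 : 0 ≤ hhat)
    (hbound : ∀ n, 1 ≤ n → μ {x | n ∈ T x} ≤ ENNReal.ofReal (A * (n : ℝ) ^ (p - 1)))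
    {N : ℕ} (hN : 1 ≤ N) (k : ℕ) :
    ∑ I ∈ powersetCard k (Icc 1 N),
        (Real.exp (hhat * (N : ℝ) ^ (-p)) - 1) ^ #I * μ.real {x | ↑I ⊆ T x} ≤
      (2 * (hhat * Real.exp hhat) * (A / p) * (2 / ((k : ℝ) + 1)) ^ (p / 2)) ^ k := by
  obtain rfl | hk := k.eq_zero_or_pos
  · simp
  set c := Real.exp (hhat * (N : ℝ) ^ (-p)) - 1
  set ρ := (2 / ((k : ℝ) + 1)) ^ (p / 2)
  have hN0 : (0 : ℝ) < N := by exact_mod_cast hN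
  have hc0 : 0 ≤ c := sub_nonneg.mpr (Real.one_le_exp (by positivity))
  have hcN : c * (N : ℝ) ^ p ≤ hhat * Real.exp hhat := by
    have hpow_cancel : (N : ℝ) ^ (-p) * (N : ℝ) ^ p = 1 := by
      rw [Real.rpow_neg hN0.le, inv_mul_cancel₀ (Real.rpow_pos_of_pos hN0 p).ne']
    have hh_le : hhat * (N : ℝ) ^ (-p) ≤ hhat := mul_le_of_le_one_right hhat0
      (Real.rpow_le_one_of_one_le_of_nonpos (by exact_mod_cast hN) (by linarith))
    calc c * (N : ℝ) ^ p
        ≤ hhat * (N : ℝ) ^ (-p) * Real.exp (hhat * (N : ℝ) ^ (-p)) * (N : ℝ) ^ p :=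
          mul_le_mul_of_nonneg_right (Real.exp_sub_one_le_mul_exp _) (by positivity)
      _ = hhat * Real.exp (hhat * (N : ℝ) ^ (-p)) := by
          rw [mul_right_comm, mul_assoc hhat, hpow_cancel, mul_one]
      _ ≤ hhat * Real.exp hhat := by gcongr
  have hρ1 : ρ ≤ 1 := Real.rpow_le_one (by positivity)
    ((div_le_one (by positivity)).mpr (by norm_cast; omega)) (by positivity)
  have hsum_le : ∀ M : ℕ, ∑ m ∈ Icc 1 M, A * (m : ℝ) ^ (p - 1) ≤ A / p * (M : ℝ) ^ p := by
    intro M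
    rw [← mul_sum, div_mul_eq_mul_div, mul_div_assoc]
    exact mul_le_mul_of_nonneg_left (sum_Icc_rpow_sub_one_le hp0 hp1 M) hA
  have hsmall : ∑ m ∈ Icc 1 (2 * N / (k + 1)), A * (m : ℝ) ^ (p - 1) ≤
      A / p * (N : ℝ) ^ p * ρ ^ 2 := by
    have hdiv : ((2 * N / (k + 1) : ℕ) : ℝ) ≤ (N : ℝ) * (2 / ((k : ℝ) + 1)) := by
      refine Nat.cast_div_le.trans_eq ?_
      push_cast
      ring
    have hρ2 : ρ ^ 2 = (2 / ((k : ℝ) + 1)) ^ p := by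
      rw [← Real.rpow_natCast, ← Real.rpow_mul (by positivity)]
      norm_num
    refine (hsum_le _).trans ?_
    rw [hρ2, mul_assoc, ← Real.mul_rpow hN0.le (by positivity)]
    gcongr
  calc ∑ I ∈ powersetCard k (Icc 1 N), c ^ #I * μ.real {x | ↑I ⊆ T x}
      = c ^ k * ∑ I ∈ powersetCard k (Icc 1 N), μ.real {x | ↑I ⊆ T x} := by
        rw [mul_sum]
        exact sum_congr rfl fun I hI => by rw [(mem_powersetCard.mp hI).2]
    _ ≤ c ^ k * (2 * (A / p * (N : ℝ) ^ p) * ρ) ^ k := by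
        refine mul_le_mul_of_nonneg_left ?_ (pow_nonneg hc0 k)
        exact (sum_powersetCard_measureReal_le hrenew (fun n => by positivity) hbound k N).trans
          (sum_boundedCompositions_prod_le (fun n => by positivity) (by positivity) hρ1 hsmall
            (hsum_le N))
    _ = (2 * (c * (N : ℝ) ^ p) * (A / p) * ρ) ^ k := by rw [← mul_pow]; ring
    _ ≤ (2 * (hhat * Real.exp hhat) * (A / p) * ρ) ^ k := by gcongr

end Renewal

/-- For a renewal process `τ` (given as a random subset `T` of `ℕ` satisfying the
renewal factorization property) with `P(n ∈ τ) ≤ A n^{α'-1}`, the exponential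
moments `E[exp(h_N ∑_{n=1}^N 1_{n ∈ τ})]` with `h_N = ĥ N^{-α'}` are bounded
uniformly in `N`. -/
theorem stmt_19 {Ω : Type*} [MeasurableSpace Ω] (μ : Measure Ω) [IsProbabilityMeasure μ]
    (T : Ω → Set ℕ) (hmeas : ∀ n : ℕ, MeasurableSet {x | n ∈ T x})
    (α α' A hhat : ℝ) (hα : α ∈ Set.Ioo (0 : ℝ) 1) (hα' : 0 < α') (hα'α : α' < α)
    (hA : 0 < A) (hh : 0 < hhat)
    (hrenew : ∀ (k : ℕ) (n : Fin k → ℕ), StrictMono n → (∀ i, 0 < n i) →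
      μ {x | ∀ i, n i ∈ T x} =
        ∏ i : Fin k,
          μ {x | (n i - (if (i : ℕ) = 0 then 0 else
              n ⟨(i : ℕ) - 1, lt_of_le_of_lt (Nat.sub_le _ _) i.isLt⟩)) ∈ T x})
    (hbound : ∀ n : ℕ, 1 ≤ n →
      μ {x | n ∈ T x} ≤ ENNReal.ofReal (A * (n : ℝ) ^ (α' - 1))) :
    ∃ M : ℝ, ∀ N : ℕ, 1 ≤ N →
      (∫ x, Real.exp ((hhat * (N : ℝ) ^ (-α')) *
          ∑ n ∈ Icc 1 N, Set.indicator (T x) (fun _ => (1 : ℝ)) n) ∂μ) ≤ M := by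
  set D := 2 * (hhat * Real.exp hhat) * (A / α')
  have hρ : Tendsto (fun k : ℕ => D * (2 / ((k : ℝ) + 1)) ^ (α' / 2)) atTop (𝓝 0) := by
    have h2 : Tendsto (fun k : ℕ => 2 / ((k : ℝ) + 1)) atTop (𝓝 0) := by
      simpa [Function.comp_def] using
        (tendsto_const_div_atTop_nhds_zero_nat (2 : ℝ)).comp (tendsto_add_atTop_nat 1)
    simpa [Real.zero_rpow (by positivity : α' / 2 ≠ 0)] using
      (h2.rpow_const (p := α' / 2) (Or.inr (by positivity))).const_mul D
  have hsummable := summable_pow_self_of_tendsto_zero_s19 (fun k => by positivity) hρ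
  refine ⟨∑' k : ℕ, (D * (2 / ((k : ℝ) + 1)) ^ (α' / 2)) ^ k, fun N hN => ?_⟩
  rw [integral_exp_mul_sum_indicator hmeas, sum_powerset, Nat.card_Icc, Nat.add_sub_cancel]
  calc _ ≤ ∑ k ∈ range (N + 1), (D * (2 / ((k : ℝ) + 1)) ^ (α' / 2)) ^ k :=
        sum_le_sum fun k _ => sum_powersetCard_exp_sub_one_pow_mul_le hrenew hA.le hα'
          (hα'α.trans hα.2).le hh.le hbound hN k
    _ ≤ _ := hsummable.sum_le_tsum _ fun k _ => by positivity
end
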